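/- Let σ₁ > 0, σ₂ > 0, r ∈ ℝ, c ∈ ℝ, S₁ > 0, S₂ > 0 and ρ ∈ (−1, 1), and let u(x, y, τ) = c·e^{−rτ}·B(d_x(x, τ), d_y(y, τ); ρ) be the closed-form two-asset cash-or-nothing option price, with d_x(x, τ) = (ln(x/S₁) + (r − σ₁²/2)τ)/(σ₁√τ) and d_y(y, τ) = (ln(y/S₂) + (r − σ₂²/2)τ)/(σ₂√τ). Then as τ → 0⁺: if x > S₁ and y > S₂, u(x, y, τ) tends to c; and if x < S₁ or y < S₂ (with x, y > 0), u(x, y, τ) tends to 0. That is, the closed-form solution attains the cash-or-nothing terminal payoff u_T(x, y) = c·𝟙[x ≥ S₁ and y ≥ S₂] at expiration, away from the strikes. -/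

import Mathlib

/-!
`B(d_x, d_y)` is the mass of the quadrant `Iio d_x ×ˢ Iio d_y` under the bivariate normal density,
whose total mass is `1` (integrate in `ξ₂` first, after completing the square). As `τ → 0⁺`,
`d_x → ±∞` with the sign of `log (x / S₁)`, likewise `d_y`, and `e^{-rτ} → 1`. By dominated
convergence the quadrant mass tends to `1` when both `d_x, d_y → +∞` and to `0` as soon as one of
them tends to `-∞`.
-/

open MeasureTheory Filter Set Topology

section

variable {α ι E : Type*} [MeasurableSpace α] {μ : Measure α} [NormedAddCommGroup E]
  [NormedSpace ℝ E] {l : Filter ι} [l.IsCountablyGenerated]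

theorem tendsto_setIntegral_of_eventually_mem_iff {f : α → E} (hf : Integrable f μ)
    {s : ι → Set α} {t : Set α} (hs : ∀ i, MeasurableSet (s i)) (ht : MeasurableSet t)
    (hst : ∀ x, ∀ᶠ i in l, x ∈ s i ↔ x ∈ t) :
    Tendsto (fun i => ∫ x in s i, f x ∂μ) l (𝓝 (∫ x in t, f x ∂μ)) := by
  simp only [← integral_indicator (hs _), ← integral_indicator ht]
  refine tendsto_integral_filter_of_dominated_convergence (fun x => ‖f x‖)
    (Eventually.of_forall fun i => hf.aestronglyMeasurable.indicator (hs i))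
    (Eventually.of_forall fun i => Eventually.of_forall fun x => norm_indicator_le_norm_self _ _)
    hf.norm (Eventually.of_forall fun x => tendsto_const_nhds.congr' ?_)
  filter_upwards [hst x] with i hi
  by_cases hx : x ∈ t
  · rw [indicator_of_mem hx, indicator_of_mem (hi.2 hx)]
  · rw [indicator_of_notMem hx, indicator_of_notMem (mt hi.1 hx)]

end

section

variable {ι E : Type*} [NormedAddCommGroup E] [NormedSpace ℝ E] {l : Filter ι}
  [l.IsCountablyGenerated] {μ : Measure (ℝ × ℝ)} {f : ℝ × ℝ → E} {a b : ι → ℝ}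

theorem tendsto_setIntegral_Iio_prod_Iio_of_atTop (hf : Integrable f μ)
    (ha : Tendsto a l atTop) (hb : Tendsto b l atTop) :
    Tendsto (fun i => ∫ p in Iio (a i) ×ˢ Iio (b i), f p ∂μ) l (𝓝 (∫ p, f p ∂μ)) := by
  rw [← setIntegral_univ]
  refine tendsto_setIntegral_of_eventually_mem_iff hf
    (fun i => measurableSet_Iio.prod measurableSet_Iio) MeasurableSet.univ fun p => ?_
  filter_upwards [ha.eventually_gt_atTop p.1, hb.eventually_gt_atTop p.2] with i h₁ h₂
  exact iff_of_true ⟨h₁, h₂⟩ (mem_univ p)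

theorem tendsto_setIntegral_Iio_prod_Iio_of_atBot (hf : Integrable f μ)
    (hab : Tendsto a l atBot ∨ Tendsto b l atBot) :
    Tendsto (fun i => ∫ p in Iio (a i) ×ˢ Iio (b i), f p ∂μ) l (𝓝 0) := by
  rw [← setIntegral_empty (f := f) (μ := μ)]
  refine tendsto_setIntegral_of_eventually_mem_iff hf
    (fun i => measurableSet_Iio.prod measurableSet_Iio) MeasurableSet.empty fun p => ?_
  rcases hab with ha | hb
  · filter_upwards [ha.eventually_le_atBot p.1] with i h
    exact iff_of_false (fun hp => (mem_Iio.1 hp.1).not_ge h) (notMem_empty p)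
  · filter_upwards [hb.eventually_le_atBot p.2] with i h
    exact iff_of_false (fun hp => (mem_Iio.1 hp.2).not_ge h) (notMem_empty p)

end

noncomputable def bivariateGaussianKernel (ρ : ℝ) (p : ℝ × ℝ) : ℝ :=
  Real.exp (-(p.1 ^ 2 - 2 * ρ * p.1 * p.2 + p.2 ^ 2) / (2 * (1 - ρ ^ 2)))

namespace bivariateGaussianKernel

variable {ρ : ℝ}

theorem continuous (ρ : ℝ) : Continuous (bivariateGaussianKernel ρ) := by
  unfold bivariateGaussianKernel
  fun_prop

/-- Completing the square in `y`: given `x`, `y` is normal with mean `ρ x`, variance `1 - ρ²`. -/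
theorem eq_mul (hρ : ρ ^ 2 ≠ 1) (x y : ℝ) :
    bivariateGaussianKernel ρ (x, y) =
      Real.exp (-(1 / 2) * x ^ 2) * Real.exp (-(2 * (1 - ρ ^ 2))⁻¹ * (y - ρ * x) ^ 2) := by
  have h : 1 - ρ ^ 2 ≠ 0 := sub_ne_zero.2 (Ne.symm hρ)
  rw [bivariateGaussianKernel, ← Real.exp_add]
  congr 1
  field_simp
  ring

theorem integral_right (hρ : ρ ^ 2 < 1) (x : ℝ) :
    ∫ y, bivariateGaussianKernel ρ (x, y) =
      Real.exp (-(1 / 2) * x ^ 2) * Real.sqrt (Real.pi * (2 * (1 - ρ ^ 2))) := by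
  simp only [eq_mul hρ.ne, integral_const_mul]
  rw [integral_sub_right_eq_self (fun y => Real.exp (-(2 * (1 - ρ ^ 2))⁻¹ * y ^ 2)) (ρ * x),
    integral_gaussian, div_inv_eq_mul]

theorem integrable (hρ : ρ ^ 2 < 1) : Integrable (bivariateGaussianKernel ρ) := by
  have hb : 0 < (2 * (1 - ρ ^ 2))⁻¹ := by
    have := sub_pos.2 hρ
    positivity
  rw [Measure.volume_eq_prod, integrable_prod_iff (continuous ρ).aestronglyMeasurable]
  refine ⟨Eventually.of_forall fun x => ?_, ?_⟩
  · simp only [eq_mul hρ.ne]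
    exact ((integrable_exp_neg_mul_sq hb).comp_sub_right (ρ * x)).const_mul _
  · have hnorm (p : ℝ × ℝ) : ‖bivariateGaussianKernel ρ p‖ = bivariateGaussianKernel ρ p :=
      Real.norm_of_nonneg (Real.exp_pos _).le
    simp only [hnorm, integral_right hρ]
    exact (integrable_exp_neg_mul_sq one_half_pos).mul_const _

theorem integral (hρ : ρ ^ 2 < 1) :
    ∫ p, bivariateGaussianKernel ρ p = 2 * Real.pi * Real.sqrt (1 - ρ ^ 2) := by
  rw [Measure.volume_eq_prod,
    integral_prod _ (by rw [← Measure.volume_eq_prod]; exact integrable hρ)]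
  simp only [integral_right hρ, integral_mul_const, integral_gaussian]
  rw [← Real.sqrt_mul (by positivity),
    show Real.pi / (1 / 2) * (Real.pi * (2 * (1 - ρ ^ 2))) = (2 * Real.pi) ^ 2 * (1 - ρ ^ 2) by
      ring,
    Real.sqrt_mul (by positivity), Real.sqrt_sq (by positivity)]

end bivariateGaussianKernel

noncomputable def bivariateNormalCDF (ρ a b : ℝ) : ℝ :=
  (∫ p in Iio a ×ˢ Iio b, bivariateGaussianKernel ρ p) / (2 * Real.pi * Real.sqrt (1 - ρ ^ 2))

section bivariateNormalCDF

variable {ρ : ℝ}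

theorem bivariateNormalCDF_eq_integral_Iio_integral_Iio (hρ : ρ ^ 2 < 1) (a b : ℝ) :
    bivariateNormalCDF ρ a b = 1 / (2 * Real.pi * Real.sqrt (1 - ρ ^ 2)) *
      ∫ ξ₁ in Iio a, ∫ ξ₂ in Iio b, bivariateGaussianKernel ρ (ξ₁, ξ₂) := by
  rw [bivariateNormalCDF, one_div_mul_eq_div, Measure.volume_eq_prod, setIntegral_prod _
    (by rw [← Measure.volume_eq_prod]; exact (bivariateGaussianKernel.integrable hρ).integrableOn)]

variable {ι : Type*} {l : Filter ι} [l.IsCountablyGenerated] {a b : ι → ℝ}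

theorem tendsto_bivariateNormalCDF_of_atTop (hρ : ρ ^ 2 < 1)
    (ha : Tendsto a l atTop) (hb : Tendsto b l atTop) :
    Tendsto (fun i => bivariateNormalCDF ρ (a i) (b i)) l (𝓝 1) := by
  have hpos : 0 < 2 * Real.pi * Real.sqrt (1 - ρ ^ 2) := by
    have := sub_pos.2 hρ
    positivity
  have h := (tendsto_setIntegral_Iio_prod_Iio_of_atTop
    (bivariateGaussianKernel.integrable hρ) ha hb).div_const (2 * Real.pi * Real.sqrt (1 - ρ ^ 2))
  rwa [bivariateGaussianKernel.integral hρ, div_self hpos.ne'] at h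

theorem tendsto_bivariateNormalCDF_of_atBot (hρ : ρ ^ 2 < 1)
    (hab : Tendsto a l atBot ∨ Tendsto b l atBot) :
    Tendsto (fun i => bivariateNormalCDF ρ (a i) (b i)) l (𝓝 0) := by
  rw [← zero_div (2 * Real.pi * Real.sqrt (1 - ρ ^ 2))]
  exact (tendsto_setIntegral_Iio_prod_Iio_of_atBot
    (bivariateGaussianKernel.integrable hρ) hab).div_const _

end bivariateNormalCDF

noncomputable def blackScholesD (S σ k x τ : ℝ) : ℝ :=
  (Real.log (x / S) + k * τ) / (σ * Real.sqrt τ)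

section blackScholesD

variable {S σ x : ℝ}

theorem tendsto_const_add_mul_nhdsGT_zero (L k : ℝ) :
    Tendsto (fun τ : ℝ => L + k * τ) (𝓝[>] 0) (𝓝 L) :=
  ((continuous_const.add (continuous_const.mul continuous_id)).tendsto' 0 L (by simp)).mono_left
    nhdsWithin_le_nhds

theorem tendsto_inv_mul_sqrt_nhdsGT_zero (hσ : 0 < σ) :
    Tendsto (fun τ => (σ * Real.sqrt τ)⁻¹) (𝓝[>] 0) atTop := by
  refine tendsto_inv_nhdsGT_zero.comp (tendsto_nhdsWithin_of_tendsto_nhds_of_eventually_within _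
    ?_ ?_)
  · exact ((continuous_const.mul Real.continuous_sqrt).tendsto' 0 0 (by simp)).mono_left
      nhdsWithin_le_nhds
  · filter_upwards [self_mem_nhdsWithin] with τ hτ using mul_pos hσ (Real.sqrt_pos.2 hτ)

theorem tendsto_blackScholesD_atTop (k : ℝ) (hσ : 0 < σ) (hS : 0 < S) (hx : S < x) :
    Tendsto (blackScholesD S σ k x) (𝓝[>] 0) atTop :=
  ((tendsto_const_add_mul_nhdsGT_zero _ k).pos_mul_atTop (Real.log_pos ((one_lt_div hS).2 hx))
    (tendsto_inv_mul_sqrt_nhdsGT_zero hσ)).congr fun _ => (div_eq_mul_inv _ _).symm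

theorem tendsto_blackScholesD_atBot (k : ℝ) (hσ : 0 < σ) (hS : 0 < S) (hx₀ : 0 < x)
    (hx : x < S) : Tendsto (blackScholesD S σ k x) (𝓝[>] 0) atBot :=
  ((tendsto_const_add_mul_nhdsGT_zero _ k).neg_mul_atTop
    (Real.log_neg (div_pos hx₀ hS) ((div_lt_one hS).2 hx))
    (tendsto_inv_mul_sqrt_nhdsGT_zero hσ)).congr fun _ => (div_eq_mul_inv _ _).symm

end blackScholesD

/-- At expiration (τ → 0⁺), the closed-form two-asset cash-or-nothing price
attains the cash-or-nothing payoff, away from the strikes. -/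
theorem cash_or_nothing_terminal_payoff
    (σ₁ σ₂ r c S₁ S₂ ρ : ℝ)
    (hσ₁ : 0 < σ₁) (hσ₂ : 0 < σ₂) (hS₁ : 0 < S₁) (hS₂ : 0 < S₂)
    (hρ₁ : -1 < ρ) (hρ₂ : ρ < 1)
    (B : ℝ → ℝ → ℝ)
    (hB : ∀ dx dy : ℝ, B dx dy =
      (1 / (2 * Real.pi * Real.sqrt (1 - ρ ^ 2))) *
        ∫ ξ₁ in Set.Iio dx, ∫ ξ₂ in Set.Iio dy,
          Real.exp (-(ξ₁ ^ 2 - 2 * ρ * ξ₁ * ξ₂ + ξ₂ ^ 2) / (2 * (1 - ρ ^ 2))))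
    (dX : ℝ → ℝ → ℝ)
    (hdX : ∀ x τ : ℝ, dX x τ =
      (Real.log (x / S₁) + (r - σ₁ ^ 2 / 2) * τ) / (σ₁ * Real.sqrt τ))
    (dY : ℝ → ℝ → ℝ)
    (hdY : ∀ y τ : ℝ, dY y τ =
      (Real.log (y / S₂) + (r - σ₂ ^ 2 / 2) * τ) / (σ₂ * Real.sqrt τ))
    (u : ℝ → ℝ → ℝ → ℝ)
    (hu : ∀ x y τ : ℝ, u x y τ = c * Real.exp (-r * τ) * B (dX x τ) (dY y τ)) :
    (∀ x y : ℝ, S₁ < x → S₂ < y →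
      Tendsto (fun τ => u x y τ) (nhdsWithin 0 (Set.Ioi 0)) (nhds c)) ∧
    (∀ x y : ℝ, 0 < x → 0 < y → (x < S₁ ∨ y < S₂) →
      Tendsto (fun τ => u x y τ) (nhdsWithin 0 (Set.Ioi 0)) (nhds 0)) := by
  have hρ : ρ ^ 2 < 1 := by nlinarith
  obtain rfl : B = bivariateNormalCDF ρ := funext₂ fun dx dy =>
    (hB dx dy).trans (bivariateNormalCDF_eq_integral_Iio_integral_Iio hρ dx dy).symm
  have hu_lim (x y : ℝ) {β : ℝ} (h : Tendsto (fun τ => bivariateNormalCDF ρ (dX x τ) (dY y τ))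
      (𝓝[>] 0) (𝓝 β)) : Tendsto (fun τ => u x y τ) (𝓝[>] 0) (𝓝 (c * β)) := by
    have hexp : Tendsto (fun τ : ℝ => Real.exp (-r * τ)) (𝓝[>] 0) (𝓝 1) :=
      ((by fun_prop : Continuous fun τ : ℝ => Real.exp (-r * τ)).tendsto' 0 1
        (by simp)).mono_left nhdsWithin_le_nhds
    simpa only [hu, mul_one] using (tendsto_const_nhds.mul hexp).mul h
  obtain rfl : dX = blackScholesD S₁ σ₁ (r - σ₁ ^ 2 / 2) := funext₂ hdX
  obtain rfl : dY = blackScholesD S₂ σ₂ (r - σ₂ ^ 2 / 2) := funext₂ hdY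
  refine ⟨fun x y hx hy => ?_, fun x y hx₀ hy₀ hxy => ?_⟩
  · simpa only [mul_one] using hu_lim x y <| tendsto_bivariateNormalCDF_of_atTop hρ
      (tendsto_blackScholesD_atTop _ hσ₁ hS₁ hx) (tendsto_blackScholesD_atTop _ hσ₂ hS₂ hy)
  · simpa only [mul_zero] using hu_lim x y <| tendsto_bivariateNormalCDF_of_atBot hρ <|
      hxy.imp (tendsto_blackScholesD_atBot _ hσ₁ hS₁ hx₀)
        (tendsto_blackScholesD_atBot _ hσ₂ hS₂ hy₀)
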